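/- Let m ∈ ℤ_{>0}, s ∈ ℤ, and a, b ∈ ℤ. For every τ with Im τ > 0 and all z₁, z₂ ∈ ℂ with z₁ ∉ ℤ + ℤτ, one has Φ̃^{[m;s]}(τ, z₁ + aτ, z₂ + bτ) = e^{−2πi m (b z₁ + a z₂)} q^{−mab} Φ̃^{[m;s]}(τ, z₁, z₂), and Φ̃^{[m;s]}(τ, z₁ + a, z₂ + b) = Φ̃^{[m;s]}(τ, z₁, z₂). -/

import Mathlib

noncomputable section

open Complex

/-- `mexp w = e^{2πi w}`. -/
def mexp (w : ℂ) : ℂ := Complex.exp (2 * (Real.pi : ℂ) * Complex.I * w)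

/-- The signed mock theta function `Φ^{sgn[m;s]}(τ,z₁,z₂)`. -/
def PhiS (sgn : ℂ) (m s : ℝ) (τ z₁ z₂ : ℂ) : ℂ :=
  ∑' n : ℤ, sgn ^ n *
    mexp ((m : ℂ) * n * (z₁ + z₂) + (s : ℂ) * z₁ + τ * ((m : ℂ) * n ^ 2 + (s : ℂ) * n)) /
    (1 - mexp (z₁ + n * τ))

/-- The signed theta function `Θ^{sgn}_{j,m}(τ,z)`. -/
def ThetaS (sgn : ℂ) (j m : ℝ) (τ z : ℂ) : ℂ :=
  ∑' n : ℤ, sgn ^ n *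
    mexp ((m : ℂ) * z * ((n : ℂ) + ((j / (2 * m) : ℝ) : ℂ)) +
      τ * (m : ℂ) * ((n : ℂ) + ((j / (2 * m) : ℝ) : ℂ)) ^ 2)

/-- `E(x) = 2∫₀ˣ e^{-πu²} du`. -/
def Efun (x : ℝ) : ℝ := 2 * ∫ u in (0:ℝ)..x, Real.exp (-Real.pi * u ^ 2)

/-- `ψ_{m,n}(τ,z) = (n - 2m Im z / Im τ) √(Im τ / m)`. -/
def psiMN (m n : ℝ) (τ z : ℂ) : ℝ := (n - 2 * m * z.im / τ.im) * Real.sqrt (τ.im / m)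

/-- The real-analytic correction `R^{sgn}_{j,m}(τ,z)`; the summation variable `n ∈ j + 2mℤ`
is written as `n = j + 2mk`, `k ∈ ℤ`, so that `(±1)^{(n-j)/(2m)} = sgn^k`. -/
def RS (sgn : ℂ) (j m : ℝ) (τ z : ℂ) : ℂ :=
  ∑' k : ℤ, sgn ^ k *
    (((Real.sign (j + 2 * m * k - 1 / 2 - j + 2 * m) -
        Efun (psiMN m (j + 2 * m * k) τ z) : ℝ)) : ℂ) *
    Complex.exp (-(Real.pi : ℂ) * Complex.I * (((j + 2 * m * k : ℝ)) : ℂ) ^ 2 * τ / (2 * (m : ℂ))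
      + 2 * (Real.pi : ℂ) * Complex.I * (((j + 2 * m * k : ℝ)) : ℂ) * z)

/-- The modifier `Φ^{sgn[m;s]}_add`; the summation variable `j ∈ s + ℤ`, `s ≤ j < s + 2m`
is written as `j = s + i`, `0 ≤ i < ⌈2m⌉`. -/
def PhiAddS (sgn : ℂ) (m s : ℝ) (τ z₁ z₂ : ℂ) : ℂ :=
  ∑ i ∈ Finset.range ⌈2 * m⌉₊,
    RS sgn (s + i) m τ ((z₁ - z₂) / 2) * ThetaS sgn (s + i) m τ (z₁ + z₂)

/-- The modified (signed) mock theta function `Φ̃^{sgn[m;s]}`. -/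
def PhiTilde (sgn : ℂ) (m s : ℝ) (τ z₁ z₂ : ℂ) : ℂ :=
  PhiS sgn m s τ z₁ z₂ - (1 / 2) * PhiAddS sgn m s τ z₁ z₂

end

/-! Raising `s` by one lowers `Φ^{[m;s]}` by the theta-type series
`∑ₙ mexp (m n (z₁ + z₂) + s z₁ + τ (m n² + s n))` (termwise `x y / (1 - x) = y / (1 - x) - y`)
and lowers the modifier by twice that series: `Θ_{j+2m,m} = Θ_{j,m}`, while reindexing
`R_{j+2m,m}` gives `R_{j,m}` up to a single flipped sign. Hence `Φ̃^{[m;s]}` depends on `s` only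
modulo `1`. Replacing `z₂` by `z₂ + τ` (resp. `z₁` by `z₁ + τ`) turns `Φ^{[m;s]}` and its modifier
into `mexp (-m z₁)` (resp. `mexp (-m z₂)`) times the same functions for `s + m` (resp. `s - m`), so
`Φ̃^{[m;s]}` just picks up that factor; iterating gives the law for `aτ, bτ`. Integer shifts
multiply every summand by `mexp` of an integer. -/

noncomputable section

open Complex ComplexConjugate Filter Real

lemma mexp_add (a b : ℂ) : mexp (a + b) = mexp a * mexp b := by
  rw [mexp, mexp, mexp, ← Complex.exp_add]
  ring_nf

lemma mexp_ne_zero (w : ℂ) : mexp w ≠ 0 := Complex.exp_ne_zero _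

lemma mexp_intCast (n : ℤ) : mexp n = 1 := by
  rw [mexp]
  simpa [mul_comm, mul_assoc] using Complex.exp_int_mul_two_pi_mul_I n

lemma mexp_add_intCast (x : ℂ) (n : ℤ) : mexp (x + n) = mexp x := by
  rw [mexp_add, mexp_intCast, mul_one]

lemma mexp_zpow (a : ℂ) (n : ℤ) : mexp a ^ n = mexp (n * a) := by
  rw [mexp, mexp, ← Complex.exp_int_mul]
  ring_nf

lemma norm_mexp (w : ℂ) : ‖mexp w‖ = Real.exp (-(2 * π * w.im)) := by
  rw [mexp, Complex.norm_exp]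
  simp [Complex.mul_re]

lemma mexp_ne_one {τ z : ℂ} (hz : ∀ x y : ℤ, z ≠ x + y * τ) (n : ℤ) : mexp (z + n * τ) ≠ 1 := by
  intro h
  obtain ⟨k, hk⟩ := Complex.exp_eq_one_iff.mp h
  have h2πi : 2 * (π : ℂ) * I ≠ 0 := by simp [Real.pi_ne_zero]
  have hk' : z + n * τ = k := mul_left_cancel₀ h2πi (by rw [hk]; ring)
  exact hz k (-n) (by push_cast; linear_combination hk')

lemma summable_mexp_quadratic {τ : ℂ} (hτ : 0 < τ.im) {μ : ℝ} (hμ : 0 < μ) (β : ℂ) :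
    Summable fun n : ℤ => mexp (μ * n ^ 2 * τ + β * n) := by
  refine ((summable_jacobiTheta₂_term_iff β (2 * μ * τ)).mpr (by simpa using by positivity)).congr
    fun n => ?_
  rw [mexp, jacobiTheta₂_term]
  ring_nf

lemma one_sub_Efun (x : ℝ) : 1 - Efun x = 2 * ∫ u in Set.Ioi x, Real.exp (-π * u ^ 2) := by
  have h := intervalIntegral.integral_Ioi_sub_Ioi' (μ := MeasureTheory.volume)
    (integrable_exp_neg_mul_sq pi_pos).integrableOn (integrable_exp_neg_mul_sq pi_pos).integrableOn
    (a := 0) (b := x)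
  rw [integral_gaussian_Ioi, div_self Real.pi_ne_zero, Real.sqrt_one] at h
  rw [Efun, ← h]
  ring

lemma Efun_neg (x : ℝ) : Efun (-x) = -Efun x := by
  have h := intervalIntegral.integral_comp_neg (a := 0) (b := x)
    (fun u => Real.exp (-π * u ^ 2))
  simp only [neg_sq, neg_zero] at h
  rw [Efun, Efun, h, intervalIntegral.integral_symm (-x)]
  ring

lemma one_sub_Efun_le {x : ℝ} (hx : 1 ≤ x) : 1 - Efun x ≤ 2 * Real.exp (-π * x ^ 2) := by
  have hdom : ∀ u ∈ Set.Ioi x,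
      Real.exp (-π * u ^ 2) ≤ Real.exp (-π * x ^ 2 + x) * Real.exp (-u) := by
    intro u hu
    rw [← Real.exp_add, Real.exp_le_exp]
    have hxu : x < u := hu
    nlinarith [mul_nonneg (sub_nonneg.2 hxu.le)
      (show 0 ≤ π * (u + x) - 1 by nlinarith [Real.pi_gt_three])]
  have hbound : ∫ u in Set.Ioi x, Real.exp (-π * u ^ 2) ≤ Real.exp (-π * x ^ 2) := by
    calc ∫ u in Set.Ioi x, Real.exp (-π * u ^ 2)
        ≤ ∫ u in Set.Ioi x, Real.exp (-π * x ^ 2 + x) * Real.exp (-u) :=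
          MeasureTheory.setIntegral_mono_on (integrable_exp_neg_mul_sq pi_pos).integrableOn
            ((integrableOn_exp_neg_Ioi x).const_mul _) measurableSet_Ioi hdom
      _ = Real.exp (-π * x ^ 2) := by
          rw [MeasureTheory.integral_const_mul, integral_exp_neg_Ioi, ← Real.exp_add]
          ring_nf
  rw [one_sub_Efun]
  linarith

lemma abs_sign_sub_Efun_le {y : ℝ} (hy : 1 ≤ |y|) :
    |Real.sign y - Efun y| ≤ 2 * Real.exp (-π * y ^ 2) := by
  have tail : ∀ x, 1 ≤ x → |1 - Efun x| ≤ 2 * Real.exp (-π * x ^ 2) := fun x hx => by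
    rw [abs_of_nonneg (by rw [one_sub_Efun]; positivity)]
    exact one_sub_Efun_le hx
  rcases le_abs'.mp hy with hy | hy
  · rw [Real.sign_of_neg (by linarith), ← neg_neg y, Efun_neg, ← neg_add', abs_neg, neg_sq]
    exact tail _ (by linarith)
  · rw [Real.sign_of_pos (by linarith)]
    exact tail y hy

lemma eventually_cofinite_affine_le_or_le_neg {a : ℝ} (ha : 0 < a) (b c : ℝ) :
    ∀ᶠ k : ℤ in cofinite, (0 ≤ k ∧ c ≤ a * k + b) ∨ (k < 0 ∧ a * k + b ≤ -c) := by
  rw [Int.cofinite_eq, eventually_sup]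
  constructor
  · filter_upwards [eventually_lt_atBot 0, Eventually.intCast_atBot
      ((tendsto_atBot_add_const_right _ b (tendsto_id.const_mul_atBot ha)).eventually_le_atBot
        (-c))] with k hk hk'
    exact Or.inr ⟨hk, hk'⟩
  · filter_upwards [eventually_ge_atTop 0, Eventually.intCast_atTop
      ((tendsto_atTop_add_const_right _ b (tendsto_id.const_mul_atTop ha)).eventually_ge_atTop
        c)] with k hk hk'
    exact Or.inl ⟨hk, hk'⟩

def thetaTerm (j m : ℝ) (τ z : ℂ) (n : ℤ) : ℂ :=
  mexp (m * z * (n + ((j / (2 * m) : ℝ) : ℂ)) + τ * m * (n + ((j / (2 * m) : ℝ) : ℂ)) ^ 2)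

lemma ThetaS_one_eq_tsum (j m : ℝ) (τ z : ℂ) :
    ThetaS 1 j m τ z = ∑' n : ℤ, thetaTerm j m τ z n := by
  simp only [ThetaS, thetaTerm, one_zpow, one_mul]

lemma summable_thetaTerm {m : ℝ} (hm : 0 < m) (j : ℝ) {τ : ℂ} (hτ : 0 < τ.im) (z : ℂ) :
    Summable (thetaTerm j m τ z) := by
  refine ((summable_mexp_quadratic hτ hm (m * z + 2 * m * ((j / (2 * m) : ℝ) : ℂ) * τ)).mul_left
    (mexp (m * z * ((j / (2 * m) : ℝ) : ℂ) + τ * m * ((j / (2 * m) : ℝ) : ℂ) ^ 2))).congr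
    fun n => ?_
  rw [← mexp_add, thetaTerm]
  congr 1
  ring

lemma ThetaS_one_add_tau {m : ℝ} (hm : m ≠ 0) (j : ℝ) (τ z : ℂ) :
    ThetaS 1 j m τ (z + τ) = mexp (-(m * τ / 4) - m * z / 2) * ThetaS 1 (j + m) m τ z := by
  have hm' : (m : ℂ) ≠ 0 := ofReal_ne_zero.mpr hm
  rw [ThetaS_one_eq_tsum, ThetaS_one_eq_tsum, ← tsum_mul_left]
  refine tsum_congr fun n => ?_
  rw [thetaTerm, thetaTerm, ← mexp_add]
  congr 1
  push_cast
  field_simp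
  ring

lemma ThetaS_one_add_two_mul {m : ℝ} (hm : m ≠ 0) (j : ℝ) (τ z : ℂ) :
    ThetaS 1 (j + 2 * m) m τ z = ThetaS 1 j m τ z := by
  have hm' : (m : ℂ) ≠ 0 := ofReal_ne_zero.mpr hm
  rw [ThetaS_one_eq_tsum, ThetaS_one_eq_tsum,
    ← (Equiv.addRight (1 : ℤ)).tsum_eq (thetaTerm j m τ z)]
  refine tsum_congr fun n => ?_
  simp only [thetaTerm, Equiv.coe_addRight]
  congr 1
  push_cast
  field_simp
  ring

lemma ThetaS_one_add_intCast {m : ℕ} (hm : m ≠ 0) (j : ℝ) (c : ℤ) (τ z : ℂ) :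
    ThetaS 1 j m τ (z + c) = mexp (c * j / 2) * ThetaS 1 j m τ z := by
  rw [ThetaS_one_eq_tsum, ThetaS_one_eq_tsum, ← tsum_mul_left]
  refine tsum_congr fun n => ?_
  rw [thetaTerm, thetaTerm, ← mexp_add]
  conv_rhs => rw [← mexp_add_intCast _ (m * c * n)]
  congr 1
  push_cast
  field_simp
  ring

def rCoef (j m : ℝ) (τ z : ℂ) (k : ℤ) : ℝ :=
  Real.sign (j + 2 * m * k - 1 / 2 - j + 2 * m) - Efun (psiMN m (j + 2 * m * k) τ z)

def rExp (j m : ℝ) (τ z : ℂ) (k : ℤ) : ℂ :=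
  Complex.exp (-(π : ℂ) * I * ((j + 2 * m * k : ℝ) : ℂ) ^ 2 * τ / (2 * (m : ℂ))
    + 2 * (π : ℂ) * I * ((j + 2 * m * k : ℝ) : ℂ) * z)

lemma RS_one_eq_tsum (j m : ℝ) (τ z : ℂ) :
    RS 1 j m τ z = ∑' k : ℤ, (rCoef j m τ z k : ℂ) * rExp j m τ z k := by
  simp only [RS, rCoef, rExp, one_zpow, one_mul]

lemma norm_rExp (j m : ℝ) (τ z : ℂ) (k : ℤ) :
    ‖rExp j m τ z k‖ = Real.exp (π * (j + 2 * m * k) ^ 2 * τ.im / (2 * m)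
      - 2 * π * (j + 2 * m * k) * z.im) := by
  rw [rExp, Complex.norm_exp]
  congr 1
  have h2m : (2 * (m : ℂ)) = ((2 * m : ℝ) : ℂ) := by push_cast; ring
  rw [h2m, Complex.add_re, Complex.div_ofReal_re]
  simp only [mul_re, mul_im, neg_re, neg_im, ofReal_re, ofReal_im, I_re, I_im, re_ofNat,
    im_ofNat, pow_two]
  ring

lemma exp_neg_pi_mul_psiMN_sq_mul_norm_rExp {m : ℝ} (hm : 0 < m) (j : ℝ) {τ : ℂ}
    (hτ : 0 < τ.im) (z : ℂ) (k : ℤ) :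
    Real.exp (-π * psiMN m (j + 2 * m * k) τ z ^ 2) * ‖rExp j m τ z k‖
      = Real.exp (-(4 * π * m * z.im ^ 2 / τ.im)) * ‖thetaTerm j m τ (2 * conj z) k‖ := by
  rw [norm_rExp, thetaTerm, norm_mexp, ← Real.exp_add, ← Real.exp_add, psiMN, mul_pow,
    Real.sq_sqrt (by positivity)]
  congr 1
  simp only [add_im, mul_im, mul_re, ofReal_re, ofReal_im, conj_re, conj_im, re_ofNat, im_ofNat,
    intCast_re, intCast_im, add_re, pow_two]
  field_simp
  ring

lemma eventually_sign_eq_sign_psiMN {m : ℝ} (hm : 0 < m) (j : ℝ) {τ : ℂ} (hτ : 0 < τ.im)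
    (z : ℂ) : ∀ᶠ k : ℤ in cofinite,
      Real.sign (j + 2 * m * k - 1 / 2 - j + 2 * m) = Real.sign (psiMN m (j + 2 * m * k) τ z)
        ∧ 1 ≤ |psiMN m (j + 2 * m * k) τ z| := by
  have hψ : ∀ k : ℤ, psiMN m (j + 2 * m * k) τ z
      = 2 * m * √(τ.im / m) * k + (j - 2 * m * z.im / τ.im) * √(τ.im / m) := fun k => by
    rw [psiMN]
    ring
  filter_upwards [eventually_cofinite_affine_le_or_le_neg (by positivity : 0 < 2 * m * √(τ.im / m))
      ((j - 2 * m * z.im / τ.im) * √(τ.im / m)) 1,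
    eventually_cofinite_affine_le_or_le_neg (by positivity : 0 < 2 * m) (2 * m - 1 / 2) 1]
    with k hψk hk
  rw [← hψ] at hψk
  rcases hψk with ⟨hk₀, hψk⟩ | ⟨hk₀, hψk⟩ <;> rcases hk with ⟨hk₁, hk⟩ | ⟨hk₁, hk⟩
  · rw [Real.sign_of_pos (by linarith), Real.sign_of_pos (by linarith), abs_of_pos (by linarith)]
    exact ⟨rfl, hψk⟩
  · omega
  · omega
  · rw [Real.sign_of_neg (by linarith), Real.sign_of_neg (by linarith), abs_of_neg (by linarith)]
    exact ⟨rfl, by linarith⟩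

lemma summable_rCoef_mul_rExp {m : ℝ} (hm : 0 < m) (j : ℝ) {τ : ℂ} (hτ : 0 < τ.im) (z : ℂ) :
    Summable fun k : ℤ => (rCoef j m τ z k : ℂ) * rExp j m τ z k := by
  refine Summable.of_norm_bounded_eventually
    ((summable_thetaTerm hm j hτ (2 * conj z)).norm.mul_left
      (2 * Real.exp (-(4 * π * m * z.im ^ 2 / τ.im)))) ?_
  filter_upwards [eventually_sign_eq_sign_psiMN hm j hτ z] with k ⟨hsign, hψ⟩
  calc ‖(rCoef j m τ z k : ℂ) * rExp j m τ z k‖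
      = |Real.sign (psiMN m (j + 2 * m * k) τ z) - Efun (psiMN m (j + 2 * m * k) τ z)|
          * ‖rExp j m τ z k‖ := by
        rw [norm_mul, Complex.norm_real, Real.norm_eq_abs, rCoef, hsign]
    _ ≤ 2 * Real.exp (-π * psiMN m (j + 2 * m * k) τ z ^ 2) * ‖rExp j m τ z k‖ :=
        mul_le_mul_of_nonneg_right (abs_sign_sub_Efun_le hψ) (norm_nonneg _)
    _ = _ := by
        rw [mul_assoc, exp_neg_pi_mul_psiMN_sq_mul_norm_rExp hm j hτ z k]
        ring

lemma rCoef_add_mul_tau_div_two {τ : ℂ} (hτ : τ.im ≠ 0) (j m c : ℝ) (z : ℂ) (k : ℤ) :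
    rCoef j m τ (z + c * τ / 2) k = rCoef (j - c * m) m τ z k := by
  simp only [rCoef, psiMN, add_im, div_ofNat_im, im_ofReal_mul]
  congr 3
  · ring
  · field_simp
    ring

lemma rExp_add_mul_tau_div_two {m : ℝ} (hm : m ≠ 0) (j c : ℝ) (τ z : ℂ) (k : ℤ) :
    rExp j m τ (z + c * τ / 2) k
      = mexp (c ^ 2 * m * τ / 4 + c * m * z) * rExp (j - c * m) m τ z k := by
  have hm' : (m : ℂ) ≠ 0 := ofReal_ne_zero.mpr hm
  rw [rExp, rExp, mexp, ← Complex.exp_add]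
  congr 1
  push_cast
  field_simp
  ring

lemma RS_one_add_mul_tau_div_two {m : ℝ} (hm : m ≠ 0) {τ : ℂ} (hτ : τ.im ≠ 0) (j c : ℝ)
    (z : ℂ) :
    RS 1 j m τ (z + c * τ / 2) = mexp (c ^ 2 * m * τ / 4 + c * m * z) * RS 1 (j - c * m) m τ z := by
  rw [RS_one_eq_tsum, RS_one_eq_tsum, ← tsum_mul_left]
  refine tsum_congr fun k => ?_
  rw [rCoef_add_mul_tau_div_two hτ, rExp_add_mul_tau_div_two hm]
  ring

lemma RS_one_add_intCast_div_two (j : ℝ) (m : ℕ) (c : ℤ) (τ z : ℂ) :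
    RS 1 j m τ (z + c / 2) = mexp (c * j / 2) * RS 1 j m τ z := by
  rw [RS_one_eq_tsum, RS_one_eq_tsum, ← tsum_mul_left]
  refine tsum_congr fun k => ?_
  have hcoef : rCoef j m τ (z + c / 2) k = rCoef j m τ z k := by
    simp [rCoef, psiMN]
  have hexp : rExp j m τ (z + c / 2) k = mexp (c * j / 2) * rExp j m τ z k := by
    rw [rExp, rExp, ← mexp_add_intCast _ (m * k * c), mexp, ← Complex.exp_add]
    congr 1
    push_cast
    ring
  rw [hcoef, hexp]
  ring

lemma rCoef_add_two_mul {m : ℝ} (hm : 1 / 4 < m) (j : ℝ) (τ z : ℂ) (k : ℤ) :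
    rCoef (j + 2 * m) m τ z (k - 1) = rCoef j m τ z k - if k = 0 then 2 else 0 := by
  have hn : j + 2 * m + 2 * m * ((k - 1 : ℤ) : ℝ) = j + 2 * m * k := by push_cast; ring
  rw [rCoef, rCoef, hn]
  rw [show j + 2 * m * k - 1 / 2 - (j + 2 * m) + 2 * m = 2 * m * k - 1 / 2 by ring,
    show j + 2 * m * k - 1 / 2 - j + 2 * m = 2 * m * k + 2 * m - 1 / 2 by ring]
  split_ifs with hk
  · rw [hk, Int.cast_zero, Real.sign_of_neg (by linarith), Real.sign_of_pos (by linarith)]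
    ring
  · rcases lt_or_gt_of_ne hk with hk | hk
    · have hk' : (k : ℝ) ≤ -1 := by exact_mod_cast Int.le_sub_one_of_lt hk
      rw [Real.sign_of_neg (by nlinarith), Real.sign_of_neg (by nlinarith)]
      ring
    · have hk' : (1 : ℝ) ≤ k := by exact_mod_cast hk
      rw [Real.sign_of_pos (by nlinarith), Real.sign_of_pos (by nlinarith)]
      ring

lemma rExp_add_two_mul (j m : ℝ) (τ z : ℂ) (k : ℤ) :
    rExp (j + 2 * m) m τ z (k - 1) = rExp j m τ z k := by
  rw [rExp, rExp]
  push_cast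
  ring_nf

lemma RS_one_add_two_mul {m : ℝ} (hm : 1 / 4 < m) (j : ℝ) {τ : ℂ} (hτ : 0 < τ.im) (z : ℂ) :
    RS 1 (j + 2 * m) m τ z = RS 1 j m τ z - 2 * rExp j m τ z 0 := by
  have hterm : ∀ k : ℤ, (rCoef (j + 2 * m) m τ z (k - 1) : ℂ) * rExp (j + 2 * m) m τ z (k - 1)
      = rCoef j m τ z k * rExp j m τ z k - if k = 0 then 2 * rExp j m τ z 0 else 0 := by
    intro k
    rw [rCoef_add_two_mul hm, rExp_add_two_mul]
    split_ifs with hk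
    · subst hk
      push_cast
      ring
    · simp
  rw [RS_one_eq_tsum, RS_one_eq_tsum, ← (Equiv.subRight (1 : ℤ)).tsum_eq]
  simp only [Equiv.subRight_apply, hterm]
  rw [Summable.tsum_sub (summable_rCoef_mul_rExp (by linarith) j hτ z)
    (hasSum_ite_eq 0 _).summable, tsum_ite_eq]

def phiNumer (m j : ℝ) (τ z₁ z₂ : ℂ) (n : ℤ) : ℂ :=
  mexp (m * n * (z₁ + z₂) + j * z₁ + τ * (m * n ^ 2 + j * n))

def thetaCorrection (j m : ℝ) (τ z₁ z₂ : ℂ) : ℂ :=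
  rExp j m τ ((z₁ - z₂) / 2) 0 * ThetaS 1 j m τ (z₁ + z₂)

lemma PhiS_one_eq_tsum (m s : ℝ) (τ z₁ z₂ : ℂ) :
    PhiS 1 m s τ z₁ z₂ = ∑' n : ℤ, phiNumer m s τ z₁ z₂ n / (1 - mexp (z₁ + n * τ)) := by
  simp only [PhiS, phiNumer, one_zpow, one_mul]

lemma phiNumer_eq {m : ℝ} (hm : m ≠ 0) (j : ℝ) (τ z₁ z₂ : ℂ) (n : ℤ) :
    phiNumer m j τ z₁ z₂ n = rExp j m τ ((z₁ - z₂) / 2) 0 * thetaTerm j m τ (z₁ + z₂) n := by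
  have hm' : (m : ℂ) ≠ 0 := ofReal_ne_zero.mpr hm
  rw [phiNumer, thetaTerm, rExp, mexp, mexp, ← Complex.exp_add]
  congr 1
  push_cast
  field_simp
  ring

lemma summable_phiNumer {m : ℝ} (hm : 0 < m) (j : ℝ) {τ : ℂ} (hτ : 0 < τ.im) (z₁ z₂ : ℂ) :
    Summable (phiNumer m j τ z₁ z₂) :=
  ((summable_thetaTerm hm j hτ _).mul_left _).congr fun n => (phiNumer_eq hm.ne' j τ z₁ z₂ n).symm

lemma tsum_phiNumer {m : ℝ} (hm : m ≠ 0) (j : ℝ) (τ z₁ z₂ : ℂ) :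
    ∑' n : ℤ, phiNumer m j τ z₁ z₂ n = thetaCorrection j m τ z₁ z₂ := by
  simp only [phiNumer_eq hm, tsum_mul_left, thetaCorrection, ThetaS_one_eq_tsum]

lemma phiNumer_add_one (m j : ℝ) (τ z₁ z₂ : ℂ) (n : ℤ) :
    phiNumer m (j + 1) τ z₁ z₂ n = mexp (z₁ + n * τ) * phiNumer m j τ z₁ z₂ n := by
  rw [phiNumer, phiNumer, ← mexp_add]
  congr 1
  push_cast
  ring

lemma norm_div_one_sub_le {x : ℂ} (hx : ‖x‖ ≤ 1 / 2 ∨ 2 ≤ ‖x‖) (y : ℂ) :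
    ‖y / (1 - x)‖ ≤ 2 * ‖y‖ + 2 * ‖y / x‖ := by
  rcases hx with hx | hx
  · have h : 1 / 2 ≤ ‖1 - x‖ := by
      have := norm_sub_norm_le (1 : ℂ) x
      rw [norm_one] at this
      linarith
    rw [norm_div, div_le_iff₀ (by linarith)]
    nlinarith [norm_nonneg y, norm_nonneg (y / x)]
  · have h : ‖x‖ / 2 ≤ ‖1 - x‖ := by
      have := norm_sub_norm_le x 1
      rw [norm_one, norm_sub_rev] at this
      linarith
    have hx0 : 0 < ‖x‖ := by linarith
    rw [norm_div, norm_div, div_le_iff₀ (by linarith)]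
    calc ‖y‖ = 2 * (‖y‖ / ‖x‖) * (‖x‖ / 2) := by field_simp
      _ ≤ 2 * (‖y‖ / ‖x‖) * ‖1 - x‖ := by gcongr
      _ ≤ (2 * ‖y‖ + 2 * (‖y‖ / ‖x‖)) * ‖1 - x‖ := by gcongr; linarith [norm_nonneg y]

lemma eventually_norm_mexp_le_or_ge {τ : ℂ} (hτ : 0 < τ.im) (z : ℂ) :
    ∀ᶠ n : ℤ in cofinite, ‖mexp (z + n * τ)‖ ≤ 1 / 2 ∨ 2 ≤ ‖mexp (z + n * τ)‖ := by
  filter_upwards [eventually_cofinite_affine_le_or_le_neg (by positivity : 0 < 2 * π * τ.im)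
    (2 * π * z.im) (Real.log 2)] with n hn
  have hnorm : ‖mexp (z + n * τ)‖ = Real.exp (-(2 * π * τ.im * n + 2 * π * z.im)) := by
    rw [norm_mexp]
    congr 2
    simp
    ring
  rw [hnorm]
  rcases hn with ⟨-, hn⟩ | ⟨-, hn⟩
  · left
    calc _ ≤ Real.exp (-Real.log 2) := Real.exp_le_exp.mpr (by linarith)
      _ = 1 / 2 := by rw [Real.exp_neg, Real.exp_log two_pos, one_div]
  · right
    calc (2 : ℝ) = Real.exp (Real.log 2) := (Real.exp_log two_pos).symm
      _ ≤ _ := Real.exp_le_exp.mpr (by linarith)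

lemma summable_phiNumer_div_one_sub_mexp {m : ℝ} (hm : 0 < m) (s : ℝ) {τ : ℂ} (hτ : 0 < τ.im)
    (z₁ z₂ : ℂ) : Summable fun n : ℤ => phiNumer m s τ z₁ z₂ n / (1 - mexp (z₁ + n * τ)) := by
  refine Summable.of_norm_bounded_eventually
    (((summable_phiNumer hm s hτ z₁ z₂).norm.mul_left 2).add
      ((summable_phiNumer hm (s - 1) hτ z₁ z₂).norm.mul_left 2)) ?_
  filter_upwards [eventually_norm_mexp_le_or_ge hτ z₁] with n hx
  have hdiv : phiNumer m s τ z₁ z₂ n / mexp (z₁ + n * τ) = phiNumer m (s - 1) τ z₁ z₂ n := by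
    rw [div_eq_iff (mexp_ne_zero _), mul_comm, ← phiNumer_add_one, sub_add_cancel]
  simpa only [hdiv] using norm_div_one_sub_le hx (phiNumer m s τ z₁ z₂ n)

lemma PhiS_one_param_add_one {m : ℝ} (hm : 0 < m) (s : ℝ) {τ z₁ : ℂ} (hτ : 0 < τ.im)
    (hz : ∀ x y : ℤ, z₁ ≠ x + y * τ) (z₂ : ℂ) :
    PhiS 1 m (s + 1) τ z₁ z₂ = PhiS 1 m s τ z₁ z₂ - thetaCorrection s m τ z₁ z₂ := by
  have hterm : ∀ n : ℤ, phiNumer m (s + 1) τ z₁ z₂ n / (1 - mexp (z₁ + n * τ))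
      = phiNumer m s τ z₁ z₂ n / (1 - mexp (z₁ + n * τ)) - phiNumer m s τ z₁ z₂ n := by
    intro n
    have h : 1 - mexp (z₁ + n * τ) ≠ 0 := sub_ne_zero.mpr (mexp_ne_one hz n).symm
    rw [phiNumer_add_one]
    field_simp
    ring
  rw [PhiS_one_eq_tsum, PhiS_one_eq_tsum, tsum_congr hterm,
    Summable.tsum_sub (summable_phiNumer_div_one_sub_mexp hm s hτ z₁ z₂)
      (summable_phiNumer hm s hτ z₁ z₂), tsum_phiNumer hm.ne']

lemma PhiS_one_add_tau_right (m s : ℝ) (τ z₁ z₂ : ℂ) :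
    PhiS 1 m s τ z₁ (z₂ + τ) = mexp (-(m * z₁)) * PhiS 1 m (s + m) τ z₁ z₂ := by
  rw [PhiS_one_eq_tsum, PhiS_one_eq_tsum, ← tsum_mul_left]
  refine tsum_congr fun n => ?_
  rw [← mul_div_assoc, phiNumer, phiNumer, ← mexp_add]
  congr 2
  push_cast
  ring

lemma PhiS_one_add_tau_left (m s : ℝ) (τ z₁ z₂ : ℂ) :
    PhiS 1 m s τ (z₁ + τ) z₂ = mexp (-(m * z₂)) * PhiS 1 m (s - m) τ z₁ z₂ := by
  rw [PhiS_one_eq_tsum, PhiS_one_eq_tsum, ← tsum_mul_left, ← (Equiv.subRight (1 : ℤ)).tsum_eq]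
  refine tsum_congr fun n => ?_
  have hden : z₁ + τ + ((n - 1 : ℤ) : ℂ) * τ = z₁ + n * τ := by push_cast; ring
  rw [Equiv.subRight_apply, hden, ← mul_div_assoc, phiNumer, phiNumer, ← mexp_add]
  congr 2
  push_cast
  ring

lemma PhiS_one_add_intCast (m s a b : ℤ) (τ z₁ z₂ : ℂ) :
    PhiS 1 m s τ (z₁ + a) (z₂ + b) = PhiS 1 m s τ z₁ z₂ := by
  rw [PhiS_one_eq_tsum, PhiS_one_eq_tsum]
  refine tsum_congr fun n => ?_
  have hden : z₁ + a + n * τ = z₁ + n * τ + a := by ring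
  rw [hden, mexp_add_intCast, phiNumer, phiNumer]
  conv_rhs => rw [← mexp_add_intCast _ (m * n * (a + b) + s * a)]
  congr 2
  push_cast
  ring

lemma PhiAddS_one_add_tau_right {m : ℝ} (hm : m ≠ 0) (s : ℝ) {τ : ℂ} (hτ : τ.im ≠ 0)
    (z₁ z₂ : ℂ) :
    PhiAddS 1 m s τ z₁ (z₂ + τ) = mexp (-(m * z₁)) * PhiAddS 1 m (s + m) τ z₁ z₂ := by
  rw [PhiAddS, PhiAddS, Finset.mul_sum]
  refine Finset.sum_congr rfl fun i _ => ?_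
  have hw : (z₁ - (z₂ + τ)) / 2 = (z₁ - z₂) / 2 + ((-1 : ℝ) : ℂ) * τ / 2 := by push_cast; ring
  rw [hw, ← add_assoc, RS_one_add_mul_tau_div_two hm hτ, ThetaS_one_add_tau hm,
    show s + i - -1 * m = s + m + i by ring, show s + i + m = s + m + i by ring,
    mul_mul_mul_comm, ← mexp_add]
  congr 2
  push_cast
  ring

lemma PhiAddS_one_add_tau_left {m : ℝ} (hm : m ≠ 0) (s : ℝ) {τ : ℂ} (hτ : τ.im ≠ 0)
    (z₁ z₂ : ℂ) :
    PhiAddS 1 m s τ (z₁ + τ) z₂ = mexp (-(m * z₂)) * PhiAddS 1 m (s - m) τ z₁ z₂ := by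
  rw [PhiAddS, PhiAddS, Finset.mul_sum]
  refine Finset.sum_congr rfl fun i _ => ?_
  have hw : (z₁ + τ - z₂) / 2 = (z₁ - z₂) / 2 + ((1 : ℝ) : ℂ) * τ / 2 := by push_cast; ring
  rw [hw, add_right_comm, RS_one_add_mul_tau_div_two hm hτ, ThetaS_one_add_tau hm,
    show s + i + m = s + i - m + 2 * m by ring, ThetaS_one_add_two_mul hm,
    show s + i - 1 * m = s - m + i by ring, show s + i - m = s - m + i by ring,
    mul_mul_mul_comm, ← mexp_add]
  congr 2
  push_cast
  ring

lemma PhiAddS_one_add_intCast {m : ℕ} (hm : m ≠ 0) (s a b : ℤ) (τ z₁ z₂ : ℂ) :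
    PhiAddS 1 m s τ (z₁ + a) (z₂ + b) = PhiAddS 1 m s τ z₁ z₂ := by
  rw [PhiAddS, PhiAddS]
  refine Finset.sum_congr rfl fun i _ => ?_
  have hw : (z₁ + a - (z₂ + b)) / 2 = (z₁ - z₂) / 2 + ((a - b : ℤ) : ℂ) / 2 := by push_cast; ring
  have hv : z₁ + a + (z₂ + b) = z₁ + z₂ + ((a + b : ℤ) : ℂ) := by push_cast; ring
  have hphase : ((a - b : ℤ) : ℂ) * ((s + i : ℝ) : ℂ) / 2
      + ((a + b : ℤ) : ℂ) * ((s + i : ℝ) : ℂ) / 2 = ((a * (s + i) : ℤ) : ℂ) := by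
    push_cast
    ring
  rw [hw, hv, RS_one_add_intCast_div_two, ThetaS_one_add_intCast hm, mul_mul_mul_comm,
    ← mexp_add, hphase, mexp_intCast, one_mul]

lemma PhiAddS_one_param_add_one {m : ℕ} (hm : 0 < m) (s : ℝ) {τ : ℂ} (hτ : 0 < τ.im)
    (z₁ z₂ : ℂ) :
    PhiAddS 1 m (s + 1) τ z₁ z₂ = PhiAddS 1 m s τ z₁ z₂ - 2 * thetaCorrection s m τ z₁ z₂ := by
  set g : ℝ → ℂ := fun j => RS 1 j m τ ((z₁ - z₂) / 2) * ThetaS 1 j m τ (z₁ + z₂)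
  have hsum : ∀ t : ℝ, PhiAddS 1 m t τ z₁ z₂ = ∑ i ∈ Finset.range (2 * m), g (t + i) := by
    intro t
    rw [PhiAddS, show (2 * m : ℝ) = ((2 * m : ℕ) : ℝ) by push_cast; ring, Nat.ceil_natCast]
  have hm' : (1 / 4 : ℝ) < m := by
    have : (1 : ℝ) ≤ m := by exact_mod_cast hm
    linarith
  have hper : g (s + (2 * m : ℕ)) = g s - 2 * thetaCorrection s m τ z₁ z₂ := by
    simp only [g, thetaCorrection, Nat.cast_mul, Nat.cast_ofNat,
      RS_one_add_two_mul hm' s hτ, ThetaS_one_add_two_mul (by positivity : (m : ℝ) ≠ 0)]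
    ring
  -- moving the window `s ≤ j < s + 2m` up by one trades `g s` for `g (s + 2m)`
  have hshift := Finset.sum_range_succ' (fun i : ℕ => g (s + i)) (2 * m)
  rw [Finset.sum_range_succ, hper] at hshift
  rw [hsum, hsum]
  simp only [Nat.cast_add, Nat.cast_one, Nat.cast_zero, add_zero, ← add_assoc,
    add_right_comm s _ (1 : ℝ)] at hshift
  linear_combination -hshift

lemma PhiTilde_one_param_add_one {m : ℕ} (hm : 0 < m) (s : ℝ) {τ z₁ : ℂ} (hτ : 0 < τ.im)
    (hz : ∀ x y : ℤ, z₁ ≠ x + y * τ) (z₂ : ℂ) :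
    PhiTilde 1 m (s + 1) τ z₁ z₂ = PhiTilde 1 m s τ z₁ z₂ := by
  rw [PhiTilde, PhiTilde, PhiS_one_param_add_one (by positivity) s hτ hz,
    PhiAddS_one_param_add_one hm s hτ]
  ring

lemma PhiTilde_one_param_add_natCast {m : ℕ} (hm : 0 < m) (s : ℝ) {τ z₁ : ℂ} (hτ : 0 < τ.im)
    (hz : ∀ x y : ℤ, z₁ ≠ x + y * τ) (z₂ : ℂ) (k : ℕ) :
    PhiTilde 1 m (s + k) τ z₁ z₂ = PhiTilde 1 m s τ z₁ z₂ := by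
  induction k with
  | zero => simp
  | succ k ih => rw [Nat.cast_succ, ← add_assoc, PhiTilde_one_param_add_one hm _ hτ hz, ih]

lemma PhiTilde_one_add_tau_right {m : ℕ} (hm : 0 < m) (s : ℝ) {τ z₁ : ℂ} (hτ : 0 < τ.im)
    (hz : ∀ x y : ℤ, z₁ ≠ x + y * τ) (z₂ : ℂ) :
    PhiTilde 1 m s τ z₁ (z₂ + τ) = mexp (-(m * z₁)) * PhiTilde 1 m s τ z₁ z₂ := by
  rw [← PhiTilde_one_param_add_natCast hm s hτ hz z₂ m, PhiTilde, PhiTilde,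
    PhiS_one_add_tau_right, PhiAddS_one_add_tau_right (by positivity) s hτ.ne']
  push_cast
  ring

lemma PhiTilde_one_add_tau_left {m : ℕ} (hm : 0 < m) (s : ℝ) {τ z₁ : ℂ} (hτ : 0 < τ.im)
    (hz : ∀ x y : ℤ, z₁ ≠ x + y * τ) (z₂ : ℂ) :
    PhiTilde 1 m s τ (z₁ + τ) z₂ = mexp (-(m * z₂)) * PhiTilde 1 m s τ z₁ z₂ := by
  have h := PhiTilde_one_param_add_natCast hm (s - m) hτ hz z₂ m
  rw [sub_add_cancel] at h
  rw [h, PhiTilde, PhiTilde, PhiS_one_add_tau_left,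
    PhiAddS_one_add_tau_left (by positivity) s hτ.ne']
  push_cast
  ring

lemma PhiTilde_one_add_intCast {m : ℕ} (hm : m ≠ 0) (s a b : ℤ) (τ z₁ z₂ : ℂ) :
    PhiTilde 1 m s τ (z₁ + a) (z₂ + b) = PhiTilde 1 m s τ z₁ z₂ := by
  rw [PhiTilde, PhiTilde, ← Int.cast_natCast m, PhiS_one_add_intCast, Int.cast_natCast,
    PhiAddS_one_add_intCast hm]

theorem apply_add_zsmul_eq_zpow_mul {G M₀ : Type*} [AddCommGroup G] [GroupWithZero M₀]
    {F : G → M₀} {S : Set G} {τ : G} {u : M₀} (hu : u ≠ 0) (hS : ∀ z, z + τ ∈ S ↔ z ∈ S)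
    (hF : ∀ z ∈ S, F (z + τ) = u * F z) (k : ℤ) : ∀ z ∈ S, F (z + k • τ) = u ^ k * F z := by
  induction k using Int.induction_on with
  | zero => simp
  | succ k ih =>
    intro z hz
    rw [show z + ((k : ℤ) + 1) • τ = z + τ + (k : ℤ) • τ by rw [add_zsmul, one_zsmul]; abel,
      ih _ ((hS z).mpr hz), hF z hz, zpow_add_one₀ hu, mul_assoc]
  | pred k ih =>
    intro z hz
    have hz' : z - τ ∈ S := (hS _).mp (by rwa [sub_add_cancel])
    have hF' : F (z - τ) = u⁻¹ * F z := by
      rw [eq_inv_mul_iff_mul_eq₀ hu, ← hF _ hz', sub_add_cancel]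
    rw [show z + (-(k : ℤ) - 1) • τ = z - τ + (-(k : ℤ)) • τ by rw [sub_zsmul, one_zsmul]; abel,
      ih _ hz', hF', zpow_sub_one₀ hu, mul_assoc]

lemma forall_add_tau_ne_iff (τ z : ℂ) :
    (∀ x y : ℤ, z + τ ≠ x + y * τ) ↔ ∀ x y : ℤ, z ≠ x + y * τ := by
  constructor <;> intro h x y hxy
  · exact h x (y + 1) (by rw [hxy]; push_cast; ring)
  · exact h x (y - 1) (by push_cast; linear_combination hxy)

lemma PhiTilde_one_add_intCast_mul_tau_right {m : ℕ} (hm : 0 < m) (s : ℝ) {τ z₁ : ℂ}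
    (hτ : 0 < τ.im) (hz : ∀ x y : ℤ, z₁ ≠ x + y * τ) (z₂ : ℂ) (b : ℤ) :
    PhiTilde 1 m s τ z₁ (z₂ + b * τ) = mexp (-(m * b * z₁)) * PhiTilde 1 m s τ z₁ z₂ := by
  have h := apply_add_zsmul_eq_zpow_mul (F := fun w => PhiTilde 1 m s τ z₁ w) (S := Set.univ)
    (mexp_ne_zero _) (by simp) (fun w _ => PhiTilde_one_add_tau_right hm s hτ hz w) b z₂ trivial
  rw [zsmul_eq_mul, mexp_zpow] at h
  rw [h]
  ring_nf

lemma PhiTilde_one_add_intCast_mul_tau_left {m : ℕ} (hm : 0 < m) (s : ℝ) {τ z₁ : ℂ}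
    (hτ : 0 < τ.im) (hz : ∀ x y : ℤ, z₁ ≠ x + y * τ) (z₂ : ℂ) (a : ℤ) :
    PhiTilde 1 m s τ (z₁ + a * τ) z₂ = mexp (-(m * a * z₂)) * PhiTilde 1 m s τ z₁ z₂ := by
  have h := apply_add_zsmul_eq_zpow_mul (F := fun w => PhiTilde 1 m s τ w z₂)
    (S := {w | ∀ x y : ℤ, w ≠ x + y * τ}) (mexp_ne_zero _) (forall_add_tau_ne_iff τ)
    (fun w hw => PhiTilde_one_add_tau_left hm s hτ hw z₂) a z₁ hz
  rw [zsmul_eq_mul, mexp_zpow] at h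
  rw [h]
  ring_nf

end

/-- elliptic transformation properties of `Φ̃^{[m;s]}`, `m ∈ ℤ_{>0}`,
`s, a, b ∈ ℤ`; here `q^{-mab} = mexp (τ * (-(m*a*b)))`. -/
theorem stmt2 (m s a b : ℤ) (hm : 0 < m) (τ z₁ z₂ : ℂ) (hτ : 0 < τ.im)
    (hz : ∀ x y : ℤ, z₁ ≠ (x : ℂ) + (y : ℂ) * τ) :
    PhiTilde 1 (m : ℝ) (s : ℝ) τ (z₁ + a * τ) (z₂ + b * τ) =
      mexp (-(m : ℂ) * ((b : ℂ) * z₁ + (a : ℂ) * z₂)) * mexp (τ * (-((m : ℂ) * a * b))) *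
        PhiTilde 1 (m : ℝ) (s : ℝ) τ z₁ z₂ ∧
    PhiTilde 1 (m : ℝ) (s : ℝ) τ (z₁ + a) (z₂ + b) = PhiTilde 1 (m : ℝ) (s : ℝ) τ z₁ z₂ := by
  lift m to ℕ using hm.le
  have hm' : 0 < m := by exact_mod_cast hm
  simp only [Int.cast_natCast]
  refine ⟨?_, PhiTilde_one_add_intCast hm'.ne' s a b τ z₁ z₂⟩
  rw [PhiTilde_one_add_intCast_mul_tau_left hm' s hτ hz,
    PhiTilde_one_add_intCast_mul_tau_right hm' s hτ hz, ← mul_assoc, ← mexp_add, ← mexp_add]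
  congr 2
  ring
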